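/- Let (X, ‖·‖) be an extended normed linear space with X = X_fin ⊕ M and flc topology τ_F. Then (X, τ_F) is linearly homeomorphic to the product (X_fin, ‖·‖) × (M, τ_F|_M). -/

import Mathlib

open scoped ENNReal Pointwise
open TopologicalSpace

section ElcsDefs

variable {X : Type*} [AddCommGroup X] [Module ℝ X]

/-- An extended seminorm: absolutely homogeneous (with `∞·0 = 0` conventions of `ℝ≥0∞`)
and subadditive map into `[0,∞]`. -/
def IsExtSeminorm (ρ : X → ℝ≥0∞) : Prop :=
  (∀ (a : ℝ) (x : X), ρ (a • x) = ENNReal.ofReal |a| * ρ x) ∧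
  (∀ x y : X, ρ (x + y) ≤ ρ x + ρ y)

/-- An extended norm is a definite extended seminorm. -/
def IsExtNorm (ρ : X → ℝ≥0∞) : Prop :=
  IsExtSeminorm ρ ∧ ∀ x : X, ρ x = 0 → x = 0

/-- The topology induced by a family of extended seminorms: generated by all balls. -/
def elcsTopology (P : Set (X → ℝ≥0∞)) : TopologicalSpace X :=
  TopologicalSpace.generateFrom
    {s | ∃ ρ ∈ P, ∃ c : X, ∃ ε : ℝ≥0∞, 0 < ε ∧ s = {x | ρ (x - c) < ε}}

/-- `(X, t)` is an extended locally convex space with defining family `P`. -/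
def IsELCS (t : TopologicalSpace X) (P : Set (X → ℝ≥0∞)) : Prop :=
  (∀ ρ ∈ P, IsExtSeminorm ρ) ∧ t = elcsTopology P

theorem IsExtSeminorm.map_zero {ρ : X → ℝ≥0∞} (h : IsExtSeminorm ρ) : ρ 0 = 0 := by
  have h0 := h.1 0 0
  simpa using h0

/-- The finiteness subspace `X_fin^ρ = {x : ρ x < ∞}` of an extended seminorm. -/
def finSubmodule {ρ : X → ℝ≥0∞} (h : IsExtSeminorm ρ) : Submodule ℝ X where
  carrier := {x | ρ x < ⊤}
  add_mem' := fun {x y} hx hy =>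
    lt_of_le_of_lt (h.2 x y) (ENNReal.add_lt_top.2 ⟨hx, hy⟩)
  zero_mem' := by simp [Set.mem_setOf_eq, h.map_zero]
  smul_mem' := fun a x hx => by
    simp only [Set.mem_setOf_eq, h.1 a x]
    exact ENNReal.mul_lt_top ENNReal.ofReal_lt_top hx

/-- The finite subspace `X_fin` of an elcs: points where every continuous extended
seminorm is finite. -/
def XfinSubmodule (t : TopologicalSpace X) : Submodule ℝ X where
  carrier := {x | ∀ ρ : X → ℝ≥0∞, IsExtSeminorm ρ → @Continuous X ℝ≥0∞ t _ ρ → ρ x < ⊤}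
  add_mem' := fun {x y} hx hy ρ hρ hc =>
    lt_of_le_of_lt (hρ.2 x y) (ENNReal.add_lt_top.2 ⟨hx ρ hρ hc, hy ρ hρ hc⟩)
  zero_mem' := by
    intro ρ hρ _
    rw [hρ.map_zero]
    exact ENNReal.zero_lt_top
  smul_mem' := fun a x hx ρ hρ hc => by
    have h1 := hρ.1 a x
    rw [h1]
    exact ENNReal.mul_lt_top ENNReal.ofReal_lt_top (hx ρ hρ hc)

/-- The continuous dual of `(X, t)` as a submodule of the linear dual. -/
noncomputable def dualSubmodule (t : TopologicalSpace X) : Submodule ℝ (X →ₗ[ℝ] ℝ) where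
  carrier := {f | @Continuous X ℝ t _ fun x => f x}
  add_mem' := by
    intro f g hf hg
    simp only [Set.mem_setOf_eq, LinearMap.add_apply] at *
    exact hf.add hg
  zero_mem' := by
    simp only [Set.mem_setOf_eq, LinearMap.zero_apply]
    exact @continuous_const X ℝ t _ 0
  smul_mem' := by
    intro c f hf
    simp only [Set.mem_setOf_eq, LinearMap.smul_apply, smul_eq_mul] at *
    exact (@continuous_const X ℝ t _ c).mul hf

/-- The weak topology of `(X, t)`: the initial topology induced by the continuous dual. -/
def weakTopology (t : TopologicalSpace X) : TopologicalSpace X :=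
  ⨅ f : ↥(dualSubmodule t), TopologicalSpace.induced (fun x => f.1 x) inferInstance

/-- The weak* topology on the dual of `(X, t)`: pointwise convergence on `X`. -/
def weakStarTopology (t : TopologicalSpace X) : TopologicalSpace ↥(dualSubmodule t) :=
  ⨅ x : X, TopologicalSpace.induced (fun f : ↥(dualSubmodule t) => f.1 x) inferInstance

/-- `tF` is the finest locally convex (vector) topology on `X` coarser than `t`. -/
def IsFlcTopology (t tF : TopologicalSpace X) : Prop :=
  t ≤ tF ∧ @IsTopologicalAddGroup X tF _ ∧ @ContinuousSMul ℝ X _ _ tF ∧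
    @LocallyConvexSpace ℝ X _ _ _ _ tF ∧
    ∀ t' : TopologicalSpace X, t ≤ t' → @IsTopologicalAddGroup X t' _ →
      @ContinuousSMul ℝ X _ _ t' → @LocallyConvexSpace ℝ X _ _ _ _ t' → tF ≤ t'

/-- A set `A` is bounded in an elcs: for every neighborhood `U` of `0` there are `r > 0`
and a finite `F ⊆ A` with `A ⊆ F + r • U`. -/
def ElcsBounded (t : TopologicalSpace X) (A : Set X) : Prop :=
  ∀ U ∈ @nhds X t 0, ∃ r : ℝ, 0 < r ∧ ∃ F : Set X, F.Finite ∧ F ⊆ A ∧ A ⊆ F + r • U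

/-- `0 ∈ Core U`: `U` absorbs every point of `X`. -/
def ZeroInCore (U : Set X) : Prop :=
  ∀ x : X, ∃ δ : ℝ, 0 < δ ∧ ∀ s : ℝ, 0 ≤ s → s ≤ δ → s • x ∈ U

/-- A family of linear functionals is equicontinuous on `(X, t)` if it is uniformly bounded
by `1` on some neighborhood of `0`. -/
def EquicontSet (t : TopologicalSpace X) (A : Set (X →ₗ[ℝ] ℝ)) : Prop :=
  ∃ U ∈ @nhds X t 0, ∀ f ∈ A, ∀ x ∈ U, |f x| ≤ 1

/-- The extended-seminorm-valued sup functional `ρ_A(x) = sup_{f ∈ A} |f x|`. -/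
noncomputable def dualSupFun (A : Set (X →ₗ[ℝ] ℝ)) : X → ℝ≥0∞ :=
  fun x => ⨆ f ∈ A, ENNReal.ofReal |f x|

/-- The topology on the dual of uniform convergence on members of a family `𝔅` of subsets
of `X`. -/
def ucTopology (t : TopologicalSpace X) (𝔅 : Set (Set X)) :
    TopologicalSpace ↥(dualSubmodule t) :=
  TopologicalSpace.generateFrom
    {s | ∃ B ∈ 𝔅, ∃ g : ↥(dualSubmodule t), ∃ ε : ℝ≥0∞, 0 < ε ∧
      s = {f | (⨆ x ∈ B, ENNReal.ofReal |f.1 x - g.1 x|) < ε}}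

/-- A vector topology is normable if it is induced by a single everywhere-finite
extended norm, i.e. by a norm. -/
def IsNormableTop {Y : Type*} [AddCommGroup Y] [Module ℝ Y] (t : TopologicalSpace Y) : Prop :=
  ∃ ρ : Y → ℝ≥0∞, IsExtNorm ρ ∧ (∀ y, ρ y < ⊤) ∧ t = elcsTopology {ρ}

/-- `Y` has countable (algebraic) dimension over `ℝ`. -/
def HasCountableDim (Y : Type*) [AddCommGroup Y] [Module ℝ Y] : Prop :=
  ∃ s : Set Y, s.Countable ∧ Submodule.span ℝ s = ⊤

/-- The Minkowski functional of a set, with values in `[0,∞]` (`inf ∅ = ∞`). -/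
noncomputable def minkowskiE (U : Set X) : X → ℝ≥0∞ :=
  fun x => sInf (ENNReal.ofReal '' {r : ℝ | 0 < r ∧ x ∈ r • U})

end ElcsDefs

section FunctionSpaces

variable {Y : Type*} [TopologicalSpace Y]

/-- The subspace of continuous functions that are bounded on `B`. -/
def boundedOnSubmodule (B : Set Y) : Submodule ℝ C(Y, ℝ) where
  carrier := {f | ∃ M : ℝ, ∀ x ∈ B, |f x| ≤ M}
  add_mem' := by
    rintro f g ⟨M, hM⟩ ⟨N, hN⟩
    exact ⟨M + N, fun x hx => (abs_add_le _ _).trans (add_le_add (hM x hx) (hN x hx))⟩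
  zero_mem' := ⟨0, by simp⟩
  smul_mem' := by
    rintro c f ⟨M, hM⟩
    refine ⟨|c| * M, fun x hx => ?_⟩
    simp only [ContinuousMap.smul_apply, smul_eq_mul, abs_mul]
    exact mul_le_mul_of_nonneg_left (hM x hx) (abs_nonneg c)

/-- The sup extended seminorm `ρ_B` on `C(Y, ℝ)` associated to `B ⊆ Y`. -/
noncomputable def supExtSeminorm (B : Set Y) : C(Y, ℝ) → ℝ≥0∞ :=
  fun f => ⨆ x ∈ B, ENNReal.ofReal |f x|

end FunctionSpaces

/-!
Let `π` be the projection onto `X_fin` along `M`. Since `π` fixes `X_fin` and `ρ = ∞` off `X_fin`,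
`ρ (π x) ≤ ρ x`; as `ρ ∘ π` is finite, `x ↦ ρ (π x)` is a real seminorm dominated by `ρ`. Its
topology is a locally convex vector topology coarser than the `ρ`-topology, hence coarser than
`τ_F` by minimality; so this seminorm is `τ_F`-continuous, and therefore
`π : (X, τ_F) → (X, ρ)` is continuous. As the `ρ`-topology is finer than `τ_F`, the splitting
`x = π x + (x - π x)` is then a homeomorphism.
-/

open Filter Topology Metric

namespace IsExtSeminorm

variable {X : Type*} [AddCommGroup X] [Module ℝ X] {ρ : X → ℝ≥0∞}

theorem map_neg (h : IsExtSeminorm ρ) (x : X) : ρ (-x) = ρ x := by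
  simpa using h.1 (-1) x

theorem comp {Y : Type*} [AddCommGroup Y] [Module ℝ Y] (h : IsExtSeminorm ρ) (f : Y →ₗ[ℝ] X) :
    IsExtSeminorm (ρ ∘ f) :=
  ⟨fun a y => by simp [h.1], fun y z => by simpa using h.2 (f y) (f z)⟩

noncomputable def toSeminorm (h : IsExtSeminorm ρ) (hfin : ∀ x, ρ x < ⊤) : Seminorm ℝ X :=
  Seminorm.of (fun x => (ρ x).toReal)
    (fun x y => ENNReal.toReal_le_add (h.2 x y) (hfin x).ne (hfin y).ne)
    (fun a x => by simp [h.1, ENNReal.toReal_mul])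

theorem ofReal_toSeminorm (h : IsExtSeminorm ρ) (hfin : ∀ x, ρ x < ⊤) (x : X) :
    ENNReal.ofReal (h.toSeminorm hfin x) = ρ x :=
  ENNReal.ofReal_toReal (hfin x).ne

noncomputable abbrev toPseudoEMetricSpace (h : IsExtSeminorm ρ) : PseudoEMetricSpace X where
  edist x y := ρ (x - y)
  edist_self x := by simp [h.map_zero]
  edist_comm x y := by rw [← h.map_neg, neg_sub]
  edist_triangle x y z := by simpa using h.2 (x - y) (y - z)

theorem elcsTopology_eq (h : IsExtSeminorm ρ) :
    elcsTopology {ρ} = h.toPseudoEMetricSpace.toUniformSpace.toTopologicalSpace := by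
  let := h.toPseudoEMetricSpace
  refine le_antisymm ((le_iff_nhds _ _).2 fun x => ?_) (le_generateFrom ?_)
  · refine nhds_basis_eball.ge_iff.2 fun ε hε => ?_
    exact @IsOpen.mem_nhds _ (elcsTopology {ρ}) _ _
      (isOpen_generateFrom_of_mem ⟨ρ, rfl, x, ε, hε, rfl⟩) (mem_eball_self hε)
  · rintro _ ⟨_, rfl, c, ε, -, rfl⟩
    exact isOpen_eball (x := c) (ε := ε)

theorem elcsTopology_le_of_withSeminorms (h : IsExtSeminorm ρ) {ι : Type*}
    {q : SeminormFamily ℝ X ι} [t : TopologicalSpace X] (hq : WithSeminorms q)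
    (hle : ∀ i x, ENNReal.ofReal (q i x) ≤ ρ x) : elcsTopology {ρ} ≤ t := by
  rw [h.elcsTopology_eq, le_iff_nhds]
  refine fun y => tendsto_id'.1 ((hq.tendsto_nhds id y).2 fun i ε hε => ?_)
  filter_upwards [@eball_mem_nhds X h.toPseudoEMetricSpace y _ (ENNReal.ofReal_pos.2 hε)] with x hx
  exact (ENNReal.ofReal_lt_ofReal_iff hε).1 ((hle i (x - y)).trans_lt hx)

theorem continuous_elcsTopology_of_le_seminorm (h : IsExtSeminorm ρ) {Y : Type*}
    [AddCommGroup Y] [Module ℝ Y] [TopologicalSpace Y] [IsTopologicalAddGroup Y]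
    (f : Y →ₗ[ℝ] X) (p : Seminorm ℝ Y) (hp : Continuous p)
    (hf : ∀ y, ρ (f y) ≤ ENNReal.ofReal (p y)) : Continuous[_, elcsTopology {ρ}] f := by
  rw [h.elcsTopology_eq]
  let := h.toPseudoEMetricSpace
  refine (EMetric.continuous_iff' (α := X)).2 fun y ε hε => ?_
  have hlim : Tendsto (fun z => ENNReal.ofReal (p (z - y))) (𝓝 y) (𝓝 0) :=
    (ENNReal.continuous_ofReal.comp (hp.comp (continuous_sub_right y))).tendsto' y 0 (by simp)
  filter_upwards [hlim.eventually (gt_mem_nhds hε)] with z hz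
  calc edist (f z) (f y) = ρ (f (z - y)) := by rw [map_sub]; rfl
    _ ≤ ENNReal.ofReal (p (z - y)) := hf _
    _ < ε := hz

end IsExtSeminorm

theorem IsFlcTopology.continuous_seminorm_of_ofReal_le {X : Type*} [AddCommGroup X] [Module ℝ X]
    {ρ : X → ℝ≥0∞} (hρ : IsExtSeminorm ρ) {tF : TopologicalSpace X}
    (hF : IsFlcTopology (elcsTopology {ρ}) tF) (p : Seminorm ℝ X)
    (hp : ∀ x, ENNReal.ofReal (p x) ≤ ρ x) : Continuous[tF, _] p := by
  let tp : TopologicalSpace X := SeminormFamily.moduleFilterBasis (fun _ : Fin 1 => p) |>.topology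
  have hwith : WithSeminorms (topology := tp) fun _ : Fin 1 => p := ⟨rfl⟩
  have hle : tF ≤ tp := hF.2.2.2.2 tp (hρ.elcsTopology_le_of_withSeminorms hwith fun _ => hp)
    hwith.topologicalAddGroup hwith.continuousSMul hwith.toLocallyConvexSpace
  exact continuous_le_dom hle (hwith.continuous_seminorm 0)

namespace Submodule

-- `τ` is bound after `σ` so that instance search finds `τ`: both are local instances.
variable {R E : Type*} [Ring R] [AddCommGroup E] [Module R E] {σ : TopologicalSpace E}
  [τ : TopologicalSpace E] [IsTopologicalAddGroup E] {p q : Submodule R E}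

theorem continuous_prodEquivOfIsCompl_of_le (hστ : σ ≤ τ) (h : IsCompl p q) :
    Continuous[@instTopologicalSpaceProd _ _ (induced Subtype.val σ) (induced Subtype.val τ), τ]
      (p.prodEquivOfIsCompl q h) := by
  let : TopologicalSpace p := induced Subtype.val σ
  have hp : Continuous ((↑) : p → E) := continuous_le_rng hστ continuous_induced_dom
  exact (hp.comp continuous_fst).add (continuous_subtype_val.comp continuous_snd)

theorem continuous_prodEquivOfIsCompl_symm_of_le (hστ : σ ≤ τ) (h : IsCompl p q)
    (hπ : Continuous[τ, σ] (p.projection q h)) :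
    Continuous[τ, @instTopologicalSpaceProd _ _ (induced Subtype.val σ) (induced Subtype.val τ)]
      (p.prodEquivOfIsCompl q h).symm := by
  let : TopologicalSpace p := induced Subtype.val σ
  have hfst : Continuous fun x => ((p.prodEquivOfIsCompl q h).symm x).1 :=
    continuous_induced_rng.2 hπ
  have hsnd : Continuous fun x => ((p.prodEquivOfIsCompl q h).symm x).2 := by
    refine continuous_induced_rng.2 ((continuous_id.sub (continuous_le_rng hστ hπ)).congr ?_)
    simp [← projection_eq_self_sub_projection]
  exact hfst.prodMk hsnd

end Submodule

theorem IsExtSeminorm.map_projection_le {X : Type*} [AddCommGroup X] [Module ℝ X]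
    {ρ : X → ℝ≥0∞} (hρ : IsExtSeminorm ρ) {M : Submodule ℝ X} (hM : IsCompl (finSubmodule hρ) M)
    (x : X) : ρ ((finSubmodule hρ).projection M hM x) ≤ ρ x := by
  by_cases hx : ρ x < ⊤
  · rw [Submodule.projection_apply_of_mem_left hM hx]
  · exact le_top.trans (not_lt.1 hx)

theorem IsFlcTopology.continuous_projection_finSubmodule {X : Type*} [AddCommGroup X]
    [Module ℝ X] {ρ : X → ℝ≥0∞} (hρ : IsExtSeminorm ρ) {M : Submodule ℝ X}
    (hM : IsCompl (finSubmodule hρ) M) {tF : TopologicalSpace X}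
    (hF : IsFlcTopology (elcsTopology {ρ}) tF) :
    Continuous[tF, elcsTopology {ρ}] ((finSubmodule hρ).projection M hM) := by
  set π := (finSubmodule hρ).projection M hM
  have hπ_fin : ∀ x, ρ (π x) < ⊤ := fun x => Submodule.projection_apply_mem hM x
  let p := (hρ.comp π).toSeminorm hπ_fin
  have hp_eq : ∀ x, ENNReal.ofReal (p x) = ρ (π x) := (hρ.comp π).ofReal_toSeminorm hπ_fin
  have := hF.2.1
  exact hρ.continuous_elcsTopology_of_le_seminorm π p
    (hF.continuous_seminorm_of_ofReal_le hρ p fun x =>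
      (hp_eq x).trans_le (hρ.map_projection_le hM x))
    fun x => (hp_eq x).ge

/-- `(X, τ_F)` is linearly homeomorphic to
`(X_fin, ‖·‖) × (M, τ_F|_M)` via `x ↦ (x_f, x_M)`. -/
theorem stmt10 {X : Type*} [AddCommGroup X] [Module ℝ X]
    (ρ : X → ℝ≥0∞) (hρ : IsExtNorm ρ)
    (t tF : TopologicalSpace X) (ht : t = elcsTopology {ρ})
    (hF : IsFlcTopology t tF)
    (M : Submodule ℝ X) (hM : IsCompl (finSubmodule hρ.1) M) :
    ∃ e : X ≃ₗ[ℝ] (↥(finSubmodule hρ.1) × ↥M),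
      (∀ x : X, ((e x).1 : X) + ((e x).2 : X) = x) ∧
      @Continuous X (↥(finSubmodule hρ.1) × ↥M) tF
        (@instTopologicalSpaceProd _ _ (TopologicalSpace.induced Subtype.val t)
          (TopologicalSpace.induced Subtype.val tF)) (fun x => e x) ∧
      @Continuous (↥(finSubmodule hρ.1) × ↥M) X
        (@instTopologicalSpaceProd _ _ (TopologicalSpace.induced Subtype.val t)
          (TopologicalSpace.induced Subtype.val tF)) tF (fun p => e.symm p) := by
  subst ht
  have := hF.2.1
  refine ⟨((finSubmodule hρ.1).prodEquivOfIsCompl M hM).symm,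
    fun x => ((finSubmodule hρ.1).prodEquivOfIsCompl M hM).apply_symm_apply x, ?_,
    Submodule.continuous_prodEquivOfIsCompl_of_le hF.1 hM⟩
  exact Submodule.continuous_prodEquivOfIsCompl_symm_of_le hF.1 hM
    (hF.continuous_projection_finSubmodule hρ.1 hM)
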